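/- Let v : ℝ × ℝ → ℝ be a smooth function. Then v satisfies the KK equation at every point (x,t) if and only if the zero-curvature equation ∂_t L̃ − ∂_x Z̃ + L̃·Z̃ − Z̃·L̃ = 0 holds for every (x,t) ∈ ℝ² and every spectral parameter k ∈ ℂ. -/

import Mathlib

/-- Partial derivative in the first (space) variable. -/
noncomputable def pdx (u : ℝ × ℝ → ℝ) : ℝ × ℝ → ℝ :=
  fun p => deriv (fun x => u (x, p.2)) p.1

/-- Partial derivative in the second (time) variable. -/
noncomputable def pdt (u : ℝ × ℝ → ℝ) : ℝ × ℝ → ℝ :=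
  fun p => deriv (fun t => u (p.1, t)) p.2

/-- Entrywise partial derivative in `x` of a matrix-valued function. -/
noncomputable def mDx (A : ℝ × ℝ → ℂ → Matrix (Fin 3) (Fin 3) ℂ) :
    ℝ × ℝ → ℂ → Matrix (Fin 3) (Fin 3) ℂ :=
  fun p k => Matrix.of fun i j => deriv (fun x => A (x, p.2) k i j) p.1

/-- Entrywise partial derivative in `t` of a matrix-valued function. -/
noncomputable def mDt (A : ℝ × ℝ → ℂ → Matrix (Fin 3) (Fin 3) ℂ) :
    ℝ × ℝ → ℂ → Matrix (Fin 3) (Fin 3) ℂ :=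
  fun p k => Matrix.of fun i j => deriv (fun t => A (p.1, t) k i j) p.2

/-- The spatial Lax matrix `L̃` of the Kaup–Kupershmidt equation. -/
noncomputable def LaxLt (u : ℝ × ℝ → ℝ) (p : ℝ × ℝ) (k : ℂ) : Matrix (Fin 3) (Fin 3) ℂ :=
  !![0, 1, 0;
     0, 0, 1;
     k ^ 3 - 3 * (pdx u p : ℂ), -6 * (u p : ℂ), 0]

/-- The temporal Lax matrix `Z̃` of the Kaup–Kupershmidt equation. -/
noncomputable def LaxZt (u : ℝ × ℝ → ℝ) (p : ℝ × ℝ) (k : ℂ) : Matrix (Fin 3) (Fin 3) ℂ :=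
  !![3 * (pdx^[3] u p : ℂ) + 36 * k ^ 3 * (u p : ℂ) + 72 * (u p : ℂ) * (pdx u p : ℂ),
     -3 * (pdx^[2] u p : ℂ) - 36 * (u p : ℂ) ^ 2,
     9 * k ^ 3;
     9 * k ^ 3 * (pdx u p : ℂ) + 9 * k ^ 6 + 3 * (pdx^[4] u p : ℂ)
       + 72 * (pdx u p : ℂ) ^ 2 + 72 * (u p : ℂ) * (pdx^[2] u p : ℂ),
     -18 * k ^ 3 * (u p : ℂ),
     -3 * (pdx^[2] u p : ℂ) - 36 * (u p : ℂ) ^ 2;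
     3 * (pdx^[5] u p : ℂ) + 225 * (pdx u p : ℂ) * (pdx^[2] u p : ℂ)
       + 72 * (u p : ℂ) * (pdx^[3] u p : ℂ) + 108 * (u p : ℂ) ^ 2 * (pdx u p : ℂ)
       - 36 * (u p : ℂ) ^ 2 * k ^ 3 + 6 * k ^ 3 * (pdx^[2] u p : ℂ),
     9 * k ^ 6 - 9 * k ^ 3 * (pdx u p : ℂ) + 3 * (pdx^[4] u p : ℂ)
       + 72 * (pdx u p : ℂ) ^ 2 + 90 * (u p : ℂ) * (pdx^[2] u p : ℂ) + 216 * (u p : ℂ) ^ 3,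
     -72 * (u p : ℂ) * (pdx u p : ℂ) - 18 * k ^ 3 * (u p : ℂ) - 3 * (pdx^[3] u p : ℂ)]

/-! ### helper lemmas -/

lemma hasDerivAt_slice_x {w : ℝ × ℝ → ℝ} (hw : Differentiable ℝ w) (p : ℝ × ℝ) :
    HasDerivAt (fun x => w (x, p.2)) (pdx w p) p.1 := by
  have hd : DifferentiableAt ℝ (fun x => w (x, p.2)) p.1 :=
    (hw (p.1, p.2)).comp p.1 (differentiableAt_id.prodMk (differentiableAt_const _))
  exact hd.hasDerivAt

lemma hasDerivAt_slice_t {w : ℝ × ℝ → ℝ} (hw : Differentiable ℝ w) (p : ℝ × ℝ) :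
    HasDerivAt (fun t => w (p.1, t)) (pdt w p) p.2 := by
  have hd : DifferentiableAt ℝ (fun t => w (p.1, t)) p.2 :=
    (hw (p.1, p.2)).comp p.2 ((differentiableAt_const _).prodMk differentiableAt_id)
  exact hd.hasDerivAt

lemma pdx_eq_fderiv {w : ℝ × ℝ → ℝ} (hw : Differentiable ℝ w) (p : ℝ × ℝ) :
    pdx w p = fderiv ℝ w p ((1 : ℝ), (0 : ℝ)) := by
  have h : HasDerivAt (fun x => w (x, p.2)) (fderiv ℝ w p ((1:ℝ), (0:ℝ))) p.1 := by
    have := (hw (p.1, p.2)).hasFDerivAt.comp_hasDerivAt p.1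
      ((hasDerivAt_id p.1).prodMk (hasDerivAt_const p.1 p.2))
    simpa [Function.comp_def] using this
  exact ((hasDerivAt_slice_x hw p).unique h)

lemma pdt_eq_fderiv {w : ℝ × ℝ → ℝ} (hw : Differentiable ℝ w) (p : ℝ × ℝ) :
    pdt w p = fderiv ℝ w p ((0 : ℝ), (1 : ℝ)) := by
  have h : HasDerivAt (fun t => w (p.1, t)) (fderiv ℝ w p ((0:ℝ), (1:ℝ))) p.2 := by
    have := (hw (p.1, p.2)).hasFDerivAt.comp_hasDerivAt p.2
      ((hasDerivAt_const p.2 p.1).prodMk (hasDerivAt_id p.2))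
    simpa [Function.comp_def] using this
  exact ((hasDerivAt_slice_t hw p).unique h)

lemma contDiff_pdx {w : ℝ × ℝ → ℝ} (hw : ContDiff ℝ (⊤ : ℕ∞) w) : ContDiff ℝ (⊤ : ℕ∞) (pdx w) := by
  have : pdx w = fun p => fderiv ℝ w p ((1:ℝ), (0:ℝ)) :=
    funext fun p => pdx_eq_fderiv (hw.differentiable (by simp)) p
  rw [this]
  exact (hw.fderiv_right (by simp)).clm_apply contDiff_const

lemma contDiff_pdx_iter {w : ℝ × ℝ → ℝ} (hw : ContDiff ℝ (⊤ : ℕ∞) w) (n : ℕ) :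
    ContDiff ℝ (⊤ : ℕ∞) (pdx^[n] w) := by
  induction n with
  | zero => exact hw
  | succ n ih => rw [Function.iterate_succ_apply']; exact contDiff_pdx ih

lemma clairaut {w : ℝ × ℝ → ℝ} (hw : ContDiff ℝ (⊤ : ℕ∞) w) (p : ℝ × ℝ) :
    pdt (pdx w) p = pdx (pdt w) p := by
  have hd : Differentiable ℝ w := hw.differentiable (by simp)
  have hcf : ContDiff ℝ (⊤ : ℕ∞) (fderiv ℝ w) := hw.fderiv_right (by simp)
  have hdf := hcf.differentiable (by simp)
  set f'' := fderiv ℝ (fderiv ℝ w) p with hf''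
  have hsymm := second_derivative_symmetric (fun y => (hd y).hasFDerivAt)
    ((hdf p).hasFDerivAt) ((0:ℝ), (1:ℝ)) ((1:ℝ), (0:ℝ))
  have e1 : pdt (pdx w) p = f'' ((0:ℝ),(1:ℝ)) ((1:ℝ),(0:ℝ)) := by
    rw [pdt_eq_fderiv ((contDiff_pdx hw).differentiable (by simp)) p]
    have hpdx : pdx w = fun q => (fderiv ℝ w q) ((1:ℝ), (0:ℝ)) :=
      funext fun q => pdx_eq_fderiv hd q
    rw [hpdx]
    have H : HasFDerivAt (fun q => (fderiv ℝ w q) ((1:ℝ), (0:ℝ)))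
        ((fderiv ℝ w p).comp (0 : (ℝ×ℝ) →L[ℝ] (ℝ×ℝ)) + f''.flip ((1:ℝ),(0:ℝ))) p :=
      (hdf p).hasFDerivAt.clm_apply (hasFDerivAt_const _ _)
    rw [H.fderiv]
    simp
  have e2 : pdx (pdt w) p = f'' ((1:ℝ),(0:ℝ)) ((0:ℝ),(1:ℝ)) := by
    have hpdt' : pdt w = fun q => (fderiv ℝ w q) ((0:ℝ), (1:ℝ)) :=
      funext fun q => pdt_eq_fderiv hd q
    have hpdt : ContDiff ℝ (⊤ : ℕ∞) (pdt w) := by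
      rw [hpdt']; exact hcf.clm_apply contDiff_const
    rw [pdx_eq_fderiv (hpdt.differentiable (by simp)) p, hpdt']
    have H : HasFDerivAt (fun q => (fderiv ℝ w q) ((0:ℝ), (1:ℝ)))
        ((fderiv ℝ w p).comp (0 : (ℝ×ℝ) →L[ℝ] (ℝ×ℝ)) + f''.flip ((0:ℝ),(1:ℝ))) p :=
      (hdf p).hasFDerivAt.clm_apply (hasFDerivAt_const _ _)
    rw [H.fderiv]
    simp
  rw [e1, e2, hsymm]

lemma hR {v : ℝ × ℝ → ℝ} (hv : ContDiff ℝ (⊤ : ℕ∞) v) (p : ℝ × ℝ) (n : ℕ) :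
    HasDerivAt (fun x => pdx^[n] v (x, p.2)) (pdx^[n+1] v p) p.1 := by
  have h := hasDerivAt_slice_x ((contDiff_pdx_iter hv n).differentiable (by simp)) p
  have e : pdx (pdx^[n] v) p = pdx^[n+1] v p := by rw [Function.iterate_succ_apply']
  rw [e] at h
  exact h

lemma hC {v : ℝ × ℝ → ℝ} (hv : ContDiff ℝ (⊤ : ℕ∞) v) (p : ℝ × ℝ) (n : ℕ) :
    HasDerivAt (fun x => ((pdx^[n] v (x, p.2) : ℝ) : ℂ)) ((pdx^[n+1] v p : ℝ) : ℂ) p.1 :=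
  (hR hv p n).ofReal_comp

lemma hda_sq {f : ℝ → ℂ} {f' : ℂ} {x : ℝ} (hf : HasDerivAt f f' x) :
    HasDerivAt (fun y => f y ^ 2) (2 * f x * f') x := by
  have h := hf.mul hf
  have e : (f * f) = fun y => f y ^ 2 := by funext y; simp only [Pi.mul_apply]; ring
  rw [e] at h
  exact h.congr_deriv (by ring)

lemma hda_cube {f : ℝ → ℂ} {f' : ℂ} {x : ℝ} (hf : HasDerivAt f f' x) :
    HasDerivAt (fun y => f y ^ 3) (3 * f x ^ 2 * f') x := by
  have h := (hda_sq hf).mul hf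
  have e : ((fun y => f y ^ 2) * f) = fun y => f y ^ 3 := by funext y; simp only [Pi.mul_apply]; ring
  rw [e] at h
  exact h.congr_deriv (by ring)

lemma mDt_LaxLt {v : ℝ × ℝ → ℝ} (hv : ContDiff ℝ (⊤ : ℕ∞) v) (p : ℝ × ℝ) (k : ℂ) :
    mDt (LaxLt v) p k =
      !![0, 0, 0; 0, 0, 0;
         -3 * ((pdt (pdx v) p : ℝ) : ℂ), -6 * ((pdt v p : ℝ) : ℂ), 0] := by
  have h0 : HasDerivAt (fun t => ((v (p.1, t) : ℝ) : ℂ)) ((pdt v p : ℝ) : ℂ) p.2 :=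
    (hasDerivAt_slice_t (hv.differentiable (by simp)) p).ofReal_comp
  have h1 : HasDerivAt (fun t => ((pdx v (p.1, t) : ℝ) : ℂ)) ((pdt (pdx v) p : ℝ) : ℂ) p.2 :=
    (hasDerivAt_slice_t ((contDiff_pdx hv).differentiable (by simp)) p).ofReal_comp
  have d20 : deriv (fun t => k ^ 3 - 3 * ((pdx v (p.1, t) : ℝ) : ℂ)) p.2
      = -3 * ((pdt (pdx v) p : ℝ) : ℂ) :=
    ((h1.const_mul 3).const_sub (k ^ 3)).deriv.trans (by ring)
  have d21 : deriv (fun t => -6 * ((v (p.1, t) : ℝ) : ℂ)) p.2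
      = -6 * ((pdt v p : ℝ) : ℂ) := (h0.const_mul (-6)).deriv
  rw [Matrix.eta_fin_three (mDt (LaxLt v) p k)]
  simp only [mDt, Matrix.of_apply, LaxLt, Matrix.cons_val_zero, Matrix.cons_val_one,
    Matrix.head_cons, Matrix.cons_val_two, Matrix.tail_cons, deriv_const', d20, d21]

lemma mDx_LaxZt {v : ℝ × ℝ → ℝ} (hv : ContDiff ℝ (⊤ : ℕ∞) v) (p : ℝ × ℝ) (k : ℂ) :
    mDx (LaxZt v) p k =
      !![3 * ((pdx^[4] v p : ℝ) : ℂ) + 36 * k ^ 3 * ((pdx v p : ℝ) : ℂ)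
           + 72 * ((pdx v p : ℝ) : ℂ) ^ 2 + 72 * ((v p : ℝ) : ℂ) * ((pdx^[2] v p : ℝ) : ℂ),
         -3 * ((pdx^[3] v p : ℝ) : ℂ) - 72 * ((v p : ℝ) : ℂ) * ((pdx v p : ℝ) : ℂ),
         0;
         9 * k ^ 3 * ((pdx^[2] v p : ℝ) : ℂ) + 3 * ((pdx^[5] v p : ℝ) : ℂ)
           + 216 * ((pdx v p : ℝ) : ℂ) * ((pdx^[2] v p : ℝ) : ℂ)
           + 72 * ((v p : ℝ) : ℂ) * ((pdx^[3] v p : ℝ) : ℂ),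
         -18 * k ^ 3 * ((pdx v p : ℝ) : ℂ),
         -3 * ((pdx^[3] v p : ℝ) : ℂ) - 72 * ((v p : ℝ) : ℂ) * ((pdx v p : ℝ) : ℂ);
         3 * ((pdx^[6] v p : ℝ) : ℂ) + 225 * ((pdx^[2] v p : ℝ) : ℂ) ^ 2
           + 297 * ((pdx v p : ℝ) : ℂ) * ((pdx^[3] v p : ℝ) : ℂ)
           + 72 * ((v p : ℝ) : ℂ) * ((pdx^[4] v p : ℝ) : ℂ)
           + 216 * ((v p : ℝ) : ℂ) * ((pdx v p : ℝ) : ℂ) ^ 2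
           + 108 * ((v p : ℝ) : ℂ) ^ 2 * ((pdx^[2] v p : ℝ) : ℂ)
           - 72 * k ^ 3 * ((v p : ℝ) : ℂ) * ((pdx v p : ℝ) : ℂ)
           + 6 * k ^ 3 * ((pdx^[3] v p : ℝ) : ℂ),
         -9 * k ^ 3 * ((pdx^[2] v p : ℝ) : ℂ) + 3 * ((pdx^[5] v p : ℝ) : ℂ)
           + 234 * ((pdx v p : ℝ) : ℂ) * ((pdx^[2] v p : ℝ) : ℂ)
           + 90 * ((v p : ℝ) : ℂ) * ((pdx^[3] v p : ℝ) : ℂ)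
           + 648 * ((v p : ℝ) : ℂ) ^ 2 * ((pdx v p : ℝ) : ℂ),
         -72 * ((pdx v p : ℝ) : ℂ) ^ 2 - 72 * ((v p : ℝ) : ℂ) * ((pdx^[2] v p : ℝ) : ℂ)
           - 18 * k ^ 3 * ((pdx v p : ℝ) : ℂ) - 3 * ((pdx^[4] v p : ℝ) : ℂ)] := by
  have h0 : HasDerivAt (fun x => ((v (x, p.2) : ℝ) : ℂ)) ((pdx v p : ℝ) : ℂ) p.1 := by
    have := hC hv p 0; simpa using this
  have h1 : HasDerivAt (fun x => ((pdx v (x, p.2) : ℝ) : ℂ)) ((pdx^[2] v p : ℝ) : ℂ) p.1 := by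
    have := hC hv p 1; simpa using this
  have h2 := hC hv p 2
  have h3 := hC hv p 3
  have h4 := hC hv p 4
  have h5 := hC hv p 5
  have d00 : deriv (fun x => 3 * ((pdx^[3] v (x, p.2) : ℝ) : ℂ)
        + 36 * k ^ 3 * ((v (x, p.2) : ℝ) : ℂ)
        + 72 * ((v (x, p.2) : ℝ) : ℂ) * ((pdx v (x, p.2) : ℝ) : ℂ)) p.1
      = 3 * ((pdx^[4] v p : ℝ) : ℂ) + 36 * k ^ 3 * ((pdx v p : ℝ) : ℂ)
        + 72 * ((pdx v p : ℝ) : ℂ) ^ 2 + 72 * ((v p : ℝ) : ℂ) * ((pdx^[2] v p : ℝ) : ℂ) :=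
    (((h3.const_mul 3).add (h0.const_mul (36 * k ^ 3))).add
      ((h0.const_mul 72).mul h1)).deriv.trans (by simp only [Prod.mk.eta]; ring)
  have d01 : deriv (fun x => -3 * ((pdx^[2] v (x, p.2) : ℝ) : ℂ)
        - 36 * ((v (x, p.2) : ℝ) : ℂ) ^ 2) p.1
      = -3 * ((pdx^[3] v p : ℝ) : ℂ) - 72 * ((v p : ℝ) : ℂ) * ((pdx v p : ℝ) : ℂ) :=
    ((h2.const_mul (-3)).sub ((hda_sq h0).const_mul 36)).deriv.trans
      (by simp only [Prod.mk.eta]; ring)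
  have d10 : deriv (fun x => 9 * k ^ 3 * ((pdx v (x, p.2) : ℝ) : ℂ) + 9 * k ^ 6
        + 3 * ((pdx^[4] v (x, p.2) : ℝ) : ℂ) + 72 * ((pdx v (x, p.2) : ℝ) : ℂ) ^ 2
        + 72 * ((v (x, p.2) : ℝ) : ℂ) * ((pdx^[2] v (x, p.2) : ℝ) : ℂ)) p.1
      = 9 * k ^ 3 * ((pdx^[2] v p : ℝ) : ℂ) + 3 * ((pdx^[5] v p : ℝ) : ℂ)
        + 216 * ((pdx v p : ℝ) : ℂ) * ((pdx^[2] v p : ℝ) : ℂ)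
        + 72 * ((v p : ℝ) : ℂ) * ((pdx^[3] v p : ℝ) : ℂ) :=
    (((((h1.const_mul (9 * k ^ 3)).add_const (9 * k ^ 6)).add
      (h4.const_mul 3)).add ((hda_sq h1).const_mul 72)).add
      ((h0.const_mul 72).mul h2)).deriv.trans (by simp only [Prod.mk.eta]; ring)
  have d11 : deriv (fun x => -18 * k ^ 3 * ((v (x, p.2) : ℝ) : ℂ)) p.1
      = -18 * k ^ 3 * ((pdx v p : ℝ) : ℂ) := (h0.const_mul (-18 * k ^ 3)).deriv
  have d20 : deriv (fun x => 3 * ((pdx^[5] v (x, p.2) : ℝ) : ℂ)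
        + 225 * ((pdx v (x, p.2) : ℝ) : ℂ) * ((pdx^[2] v (x, p.2) : ℝ) : ℂ)
        + 72 * ((v (x, p.2) : ℝ) : ℂ) * ((pdx^[3] v (x, p.2) : ℝ) : ℂ)
        + 108 * ((v (x, p.2) : ℝ) : ℂ) ^ 2 * ((pdx v (x, p.2) : ℝ) : ℂ)
        - 36 * ((v (x, p.2) : ℝ) : ℂ) ^ 2 * k ^ 3
        + 6 * k ^ 3 * ((pdx^[2] v (x, p.2) : ℝ) : ℂ)) p.1
      = 3 * ((pdx^[6] v p : ℝ) : ℂ) + 225 * ((pdx^[2] v p : ℝ) : ℂ) ^ 2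
        + 297 * ((pdx v p : ℝ) : ℂ) * ((pdx^[3] v p : ℝ) : ℂ)
        + 72 * ((v p : ℝ) : ℂ) * ((pdx^[4] v p : ℝ) : ℂ)
        + 216 * ((v p : ℝ) : ℂ) * ((pdx v p : ℝ) : ℂ) ^ 2
        + 108 * ((v p : ℝ) : ℂ) ^ 2 * ((pdx^[2] v p : ℝ) : ℂ)
        - 72 * k ^ 3 * ((v p : ℝ) : ℂ) * ((pdx v p : ℝ) : ℂ)
        + 6 * k ^ 3 * ((pdx^[3] v p : ℝ) : ℂ) :=
    ((((((h5.const_mul 3).add ((h1.const_mul 225).mul h2)).add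
      ((h0.const_mul 72).mul h3)).add (((hda_sq h0).const_mul 108).mul h1)).sub
      (((hda_sq h0).const_mul 36).mul_const (k ^ 3))).add
      (h2.const_mul (6 * k ^ 3))).deriv.trans (by simp only [Prod.mk.eta]; ring)
  have d21 : deriv (fun x => 9 * k ^ 6 - 9 * k ^ 3 * ((pdx v (x, p.2) : ℝ) : ℂ)
        + 3 * ((pdx^[4] v (x, p.2) : ℝ) : ℂ) + 72 * ((pdx v (x, p.2) : ℝ) : ℂ) ^ 2
        + 90 * ((v (x, p.2) : ℝ) : ℂ) * ((pdx^[2] v (x, p.2) : ℝ) : ℂ)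
        + 216 * ((v (x, p.2) : ℝ) : ℂ) ^ 3) p.1
      = -9 * k ^ 3 * ((pdx^[2] v p : ℝ) : ℂ) + 3 * ((pdx^[5] v p : ℝ) : ℂ)
        + 234 * ((pdx v p : ℝ) : ℂ) * ((pdx^[2] v p : ℝ) : ℂ)
        + 90 * ((v p : ℝ) : ℂ) * ((pdx^[3] v p : ℝ) : ℂ)
        + 648 * ((v p : ℝ) : ℂ) ^ 2 * ((pdx v p : ℝ) : ℂ) :=
    (((((h1.const_mul (9 * k ^ 3)).const_sub (9 * k ^ 6)).add (h4.const_mul 3)).add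
      ((hda_sq h1).const_mul 72)).add ((h0.const_mul 90).mul h2)).add
      ((hda_cube h0).const_mul 216) |>.deriv.trans (by simp only [Prod.mk.eta]; ring)
  have d22 : deriv (fun x => -72 * ((v (x, p.2) : ℝ) : ℂ) * ((pdx v (x, p.2) : ℝ) : ℂ)
        - 18 * k ^ 3 * ((v (x, p.2) : ℝ) : ℂ) - 3 * ((pdx^[3] v (x, p.2) : ℝ) : ℂ)) p.1
      = -72 * ((pdx v p : ℝ) : ℂ) ^ 2 - 72 * ((v p : ℝ) : ℂ) * ((pdx^[2] v p : ℝ) : ℂ)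
        - 18 * k ^ 3 * ((pdx v p : ℝ) : ℂ) - 3 * ((pdx^[4] v p : ℝ) : ℂ) :=
    ((((h0.const_mul (-72)).mul h1).sub (h0.const_mul (18 * k ^ 3))).sub
      (h3.const_mul 3)).deriv.trans (by simp only [Prod.mk.eta]; ring)
  rw [Matrix.eta_fin_three (mDx (LaxZt v) p k)]
  simp only [mDx, Matrix.of_apply, LaxZt, Matrix.cons_val_zero, Matrix.cons_val_one,
    Matrix.head_cons, Matrix.cons_val_two, Matrix.tail_cons, deriv_const',
    d00, d01, d10, d11, d20, d21, d22]

lemma zc_eval {v : ℝ × ℝ → ℝ} (hv : ContDiff ℝ (⊤ : ℕ∞) v) (p : ℝ × ℝ) (k : ℂ) :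
    mDt (LaxLt v) p k - mDx (LaxZt v) p k
      + LaxLt v p k * LaxZt v p k - LaxZt v p k * LaxLt v p k =
    !![0, 0, 0; 0, 0, 0;
       -3 * ((pdt (pdx v) p : ℝ) : ℂ) - 3 * ((pdx^[6] v p : ℝ) : ℂ)
         - 90 * ((v p : ℝ) : ℂ) * ((pdx^[4] v p : ℝ) : ℂ)
         - 315 * ((pdx v p : ℝ) : ℂ) * ((pdx^[3] v p : ℝ) : ℂ)
         - 225 * ((pdx^[2] v p : ℝ) : ℂ) ^ 2
         - 540 * ((v p : ℝ) : ℂ) ^ 2 * ((pdx^[2] v p : ℝ) : ℂ)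
         - 1080 * ((v p : ℝ) : ℂ) * ((pdx v p : ℝ) : ℂ) ^ 2,
       -6 * ((pdt v p : ℝ) : ℂ) - 6 * ((pdx^[5] v p : ℝ) : ℂ)
         - 180 * ((v p : ℝ) : ℂ) * ((pdx^[3] v p : ℝ) : ℂ)
         - 450 * ((pdx v p : ℝ) : ℂ) * ((pdx^[2] v p : ℝ) : ℂ)
         - 1080 * ((v p : ℝ) : ℂ) ^ 2 * ((pdx v p : ℝ) : ℂ),
       0] := by
  rw [mDt_LaxLt hv p k, mDx_LaxZt hv p k]
  ext i j
  fin_cases i <;> fin_cases j <;>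
    simp [LaxLt, LaxZt, Matrix.mul_apply, Fin.sum_univ_three, Matrix.cons_val_two,
      Matrix.tail_cons, Matrix.sub_apply, Matrix.add_apply] <;> first | ring1 | (simp [Matrix.vecHead, Matrix.vecTail]; try ring1)


/-- A smooth `v` satisfies the Kaup–Kupershmidt equation iff the zero-curvature equation
`∂ₜL̃ − ∂ₓZ̃ + L̃·Z̃ − Z̃·L̃ = 0` holds for all `(x,t)` and all spectral parameters `k`. -/
theorem kk_iff_zero_curvature (v : ℝ × ℝ → ℝ) (hv : ContDiff ℝ (⊤ : ℕ∞) v) :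
    (∀ p : ℝ × ℝ,
        pdt v p + pdx^[5] v p
          + 30 * (v p * pdx^[3] v p + (5 / 2) * pdx v p * pdx^[2] v p)
          + 180 * (v p) ^ 2 * pdx v p = 0)
      ↔
    (∀ (p : ℝ × ℝ) (k : ℂ),
        mDt (LaxLt v) p k - mDx (LaxZt v) p k
          + LaxLt v p k * LaxZt v p k - LaxZt v p k * LaxLt v p k = 0) := by
  constructor
  · intro hKK p k
    rw [zc_eval hv p k]
    have hfun : pdt v = fun q => -(pdx^[5] v q
        + 30 * (v q * pdx^[3] v q + (5 / 2) * pdx v q * pdx^[2] v q)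
        + 180 * (v q) ^ 2 * pdx v q) :=
      funext fun q => by linear_combination hKK q
    have hr0 : HasDerivAt (fun x => v (x, p.2)) (pdx v p) p.1 := by
      have := hR hv p 0; simpa using this
    have hr1 : HasDerivAt (fun x => pdx v (x, p.2)) (pdx^[2] v p) p.1 := by
      have := hR hv p 1; simpa using this
    have hr2 := hR hv p 2
    have hr3 := hR hv p 3
    have hr4 := hR hv p 4
    have hr5 := hR hv p 5
    have H := ((hr5.add (((hr0.mul hr3).add
        ((hr1.const_mul (5 / 2)).mul hr2)).const_mul 30)).add
        (((hr0.pow 2).const_mul 180).mul hr1)).neg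
    have e2 : pdx (pdt v) p = -(pdx^[6] v p + 30 * pdx v p * pdx^[3] v p
        + 30 * v p * pdx^[4] v p + 75 * (pdx^[2] v p) ^ 2 + 75 * pdx v p * pdx^[3] v p
        + 360 * v p * (pdx v p) ^ 2 + 180 * (v p) ^ 2 * pdx^[2] v p) := by
      rw [hfun]
      exact H.deriv.trans (by simp only [Prod.mk.eta, Pi.pow_apply]; ring)
    have h20 : -3 * ((pdt (pdx v) p : ℝ) : ℂ) - 3 * ((pdx^[6] v p : ℝ) : ℂ)
        - 90 * ((v p : ℝ) : ℂ) * ((pdx^[4] v p : ℝ) : ℂ)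
        - 315 * ((pdx v p : ℝ) : ℂ) * ((pdx^[3] v p : ℝ) : ℂ)
        - 225 * ((pdx^[2] v p : ℝ) : ℂ) ^ 2
        - 540 * ((v p : ℝ) : ℂ) ^ 2 * ((pdx^[2] v p : ℝ) : ℂ)
        - 1080 * ((v p : ℝ) : ℂ) * ((pdx v p : ℝ) : ℂ) ^ 2 = 0 := by
      rw [clairaut hv p, e2]
      push_cast
      ring
    have h21 : -6 * ((pdt v p : ℝ) : ℂ) - 6 * ((pdx^[5] v p : ℝ) : ℂ)
        - 180 * ((v p : ℝ) : ℂ) * ((pdx^[3] v p : ℝ) : ℂ)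
        - 450 * ((pdx v p : ℝ) : ℂ) * ((pdx^[2] v p : ℝ) : ℂ)
        - 1080 * ((v p : ℝ) : ℂ) ^ 2 * ((pdx v p : ℝ) : ℂ) = 0 := by
      have e : pdt v p = -(pdx^[5] v p
          + 30 * (v p * pdx^[3] v p + (5 / 2) * pdx v p * pdx^[2] v p)
          + 180 * (v p) ^ 2 * pdx v p) := by linear_combination hKK p
      rw [e]
      push_cast
      ring
    rw [h20, h21]
    ext i j
    fin_cases i <;> fin_cases j <;> simp [Matrix.vecHead, Matrix.vecTail]
  · intro hzc p
    have h := hzc p 0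
    rw [zc_eval hv p 0] at h
    have h21 := Matrix.ext_iff.2 h 2 1
    simp only [Matrix.cons_val', Matrix.cons_val_zero, Matrix.cons_val_one, Matrix.head_cons,
      Matrix.cons_val_two, Matrix.tail_cons, Matrix.empty_val', Matrix.cons_val_fin_one,
      Matrix.head_fin_const, Matrix.of_apply, Matrix.zero_apply] at h21
    have h21' : ((-6 * pdt v p - 6 * pdx^[5] v p - 180 * (v p * pdx^[3] v p)
        - 450 * (pdx v p * pdx^[2] v p) - 1080 * ((v p) ^ 2 * pdx v p) : ℝ) : ℂ) = 0 := by
      push_cast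
      linear_combination h21
    have hreal := Complex.ofReal_eq_zero.mp h21'
    linear_combination (-1 / 6 : ℝ) * hreal
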